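/- arXiv:2204.13055 — 2 statements merged into one kernel-verified Lean document; each statement's English description precedes it below -/
import Mathlib

section
/- Let G be a finite group and let L_1, …, L_s be pairwise distinct components of G, and write L_1⋯L_s for the subgroup they generate. Then the Fitting subgroup of C_G(L_1⋯L_s) equals the Fitting subgroup of G. In particular, for every prime p, if O_p(G) = 1 then O_p(C_G(L_1⋯L_s)) = 1. -/
attribute [local instance] Classical.propDecidable

noncomputable section

namespace QF

/-! ## Group-theoretic notions -/

/-- `H` is a normal subgroup of `K` (as subgroups of an ambient group `G`). -/
def NormalIn {G : Type*} [Group G] (H K : Subgroup G) : Prop :=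
  H ≤ K ∧ ∀ k ∈ K, ∀ h ∈ H, k * h * k⁻¹ ∈ H

/-- `L` is a subnormal subgroup of `G`: there is a finite chain of subgroups from `L` to `G`,
each normal in the next. -/
def IsSubnormal {G : Type*} [Group G] (L : Subgroup G) : Prop :=
  ∃ (n : ℕ) (c : ℕ → Subgroup G), c 0 = L ∧ c n = ⊤ ∧ ∀ i < n, NormalIn (c i) (c (i + 1))

/-- `L` is quasisimple: `L = [L,L]` and `L/Z(L)` is a nonabelian simple group. -/
def IsQuasisimple {G : Type*} [Group G] (L : Subgroup G) : Prop :=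
  ⁅L, L⁆ = L ∧ IsSimpleGroup (↥L ⧸ Subgroup.center ↥L) ∧
    ∃ a b : ↥L ⧸ Subgroup.center ↥L, a * b ≠ b * a

/-- A component of a group: a subnormal quasisimple subgroup. -/
def IsComponent {G : Type*} [Group G] (L : Subgroup G) : Prop :=
  IsSubnormal L ∧ IsQuasisimple L

/-- The Fitting subgroup: the subgroup generated by all nilpotent normal subgroups. -/
def fittingSubgroup (G : Type*) [Group G] : Subgroup G :=
  sSup {N : Subgroup G | N.Normal ∧ Group.IsNilpotent ↥N}

/-- `E(G)`: the subgroup generated by all components of `G`. -/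
def layer (G : Type*) [Group G] : Subgroup G :=
  sSup {L : Subgroup G | IsComponent L}

/-- The generalized Fitting subgroup `F*(G) = F(G) ⬝ E(G)`. -/
def genFitting (G : Type*) [Group G] : Subgroup G :=
  fittingSubgroup G ⊔ layer G

/-- `O_p(G) = 1`: every normal `p`-subgroup of `G` is trivial. -/
def OpTrivial (p : ℕ) (G : Type*) [Group G] : Prop :=
  ∀ N : Subgroup G, N.Normal → IsPGroup p ↥N → N = ⊥

/-- `E` is an elementary abelian `p`-subgroup (possibly trivial). -/
def IsElemAb (p : ℕ) {G : Type*} [Group G] (E : Subgroup G) : Prop :=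
  (∀ x ∈ E, ∀ y ∈ E, x * y = y * x) ∧ ∀ x ∈ E, x ^ p = 1

/-- The Quillen poset `A_p(H)` of nontrivial elementary abelian `p`-subgroups of `G`
contained in the subgroup `H`, regarded as a set of subgroups of `G`. -/
def apIn (p : ℕ) {G : Type*} [Group G] (H : Subgroup G) : Set (Subgroup G) :=
  {E | E ≠ ⊥ ∧ IsElemAb p E ∧ E ≤ H}

/-- The `p`-outer poset of `L` in `G`: nontrivial elementary abelian `p`-subgroups `B`
of `N_G(L)` with `B ∩ (L C_G(L)) = 1`. -/
def outPoset (p : ℕ) {G : Type*} [Group G] (L : Subgroup G) : Set (Subgroup G) :=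
  {B | B ≠ ⊥ ∧ IsElemAb p B ∧ B ≤ Subgroup.normalizer (L : Set G) ∧
    B ⊓ (L ⊔ Subgroup.centralizer (L : Set G)) = ⊥}

/-- The `p`-rank of a group: the largest `n` such that `K` contains an elementary abelian
`p`-subgroup of order `p ^ n`. -/
def pRank (p : ℕ) (K : Type*) [Group K] : ℕ :=
  sSup {n : ℕ | ∃ E : Subgroup K, IsElemAb p E ∧ Nat.card ↥E = p ^ n}

/-- The `p`-local `q`-rank of a group `K`: the maximum of the `q`-ranks of normalizers of
nontrivial `p`-subgroups. -/
def pLocalRank (p q : ℕ) (K : Type*) [Group K] : ℕ :=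
  sSup {n : ℕ | ∃ P : Subgroup K, P ≠ ⊥ ∧ IsPGroup p ↥P ∧
    ∃ E : Subgroup K, E ≤ Subgroup.normalizer (P : Set K) ∧ IsElemAb q E ∧ Nat.card ↥E = q ^ n}

/-- A group is `q`-elementary if it is the (internal) direct product of a cyclic group and
a `q`-group. -/
def qElementary (q : ℕ) (G : Type*) [Group G] : Prop :=
  ∃ C R : Subgroup G, IsCyclic ↥C ∧ IsPGroup q ↥R ∧
    (∀ c ∈ C, ∀ r ∈ R, c * r = r * c) ∧ C ⊓ R = ⊥ ∧ C ⊔ R = ⊤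

/-! ## The augmented rational chain complex of a finite poset

We represent a rational simplicial chain of (degree `k - 1`) of a poset `α` as a function
`Finset α → ℚ` supported on the `k`-element chains of `α`. -/

/-- The coefficient of the face `t` in the boundary of the simplex `s`: if `t ⊆ s` with
exactly one element `x` of `s` deleted, this is `(-1) ^ (number of elements of s below x)`. -/
def bdryCoeff {α : Type*} [PartialOrder α] (s t : Finset α) : ℚ :=
  if t ⊆ s ∧ t.card + 1 = s.card then
    ∑ x ∈ s \ t, (-1 : ℚ) ^ (s.filter fun y => y < x).card
  else 0

/-- The simplicial boundary operator (on functions `Finset α → ℚ`). -/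
def bdryFun {α : Type*} [PartialOrder α] (f : Finset α → ℚ) : Finset α → ℚ :=
  fun t => ∑ᶠ s : Finset α, bdryCoeff s t * f s

/-- `f` is a chain of size `k` (i.e. simplicial degree `k - 1`) of the subposet `S` of `α`:
it is supported on totally ordered `k`-element subsets of `S`. -/
def SuppOn {α : Type*} [PartialOrder α] (S : Set α) (k : ℕ) (f : Finset α → ℚ) : Prop :=
  ∀ s, f s ≠ 0 → s.card = k ∧ IsChain (· ≤ ·) (↑s : Set α) ∧ ↑s ⊆ S

/-- `f` is a cycle of size `k` (degree `k - 1`) of the augmented rational chain complex of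
the subposet `S`. -/
def IsCycleOn {α : Type*} [PartialOrder α] (S : Set α) (k : ℕ) (f : Finset α → ℚ) : Prop :=
  SuppOn S k f ∧ bdryFun f = 0

/-- `f` is a boundary of size `k` (degree `k - 1`) in the augmented rational chain complex of
the subposet `S`. -/
def IsBoundaryOn {α : Type*} [PartialOrder α] (S : Set α) (k : ℕ) (f : Finset α → ℚ) : Prop :=
  ∃ g : Finset α → ℚ, SuppOn S (k + 1) g ∧ bdryFun g = f

/-- The reduced rational homology of the subposet `S` is nonzero in degree `k - 1`. -/
def RHomNZ {α : Type*} [PartialOrder α] (S : Set α) (k : ℕ) : Prop :=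
  ∃ f : Finset α → ℚ, IsCycleOn S k f ∧ ¬ IsBoundaryOn S k f

/-- The reduced Euler characteristic of the subposet `S`:
`χ̃(S) = ∑_{n ≥ -1} (-1)^n f_n(S)` where `f_n` is the number of `(n+1)`-element chains. -/
def redEuler {α : Type*} [PartialOrder α] (S : Set α) : ℤ :=
  ∑ᶠ s : Finset α,
    if IsChain (· ≤ ·) (↑s : Set α) ∧ ↑s ⊆ S then (-1 : ℤ) ^ (s.card + 1) else 0

/-! ## Chains in a subcomplex of the order complex -/

/-- `f` is a chain of size `k` supported on the subcomplex `M` (together with the empty chain,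
for the augmentation). -/
def SuppM {α : Type*} [PartialOrder α] (M : Set (Finset α)) (k : ℕ) (f : Finset α → ℚ) : Prop :=
  ∀ s, f s ≠ 0 → s.card = k ∧ (s = ∅ ∨ s ∈ M)

/-- `f` is a cycle of size `k` of the (augmented) chain complex of the subcomplex `M`. -/
def IsCycleM {α : Type*} [PartialOrder α] (M : Set (Finset α)) (k : ℕ) (f : Finset α → ℚ) :
    Prop :=
  SuppM M k f ∧ bdryFun f = 0

/-- `f` is a boundary of size `k` in the (augmented) chain complex of the subcomplex `M`. -/
def IsBoundaryM {α : Type*} [PartialOrder α] (M : Set (Finset α)) (k : ℕ) (f : Finset α → ℚ) :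
    Prop :=
  ∃ g : Finset α → ℚ, SuppM M (k + 1) g ∧ bdryFun g = f

/-! ## Quillen-conjecture properties -/

/-- `G` satisfies (H-QC) at `p`: if `O_p(G) = 1` then `A_p(G)` has nonzero reduced rational
homology in some degree. -/
def HQC (p : ℕ) (G : Type*) [Group G] : Prop :=
  OpTrivial p G → ∃ k : ℕ, RHomNZ (apIn p (⊤ : Subgroup G)) k

/-- `K` has Quillen dimension at `p`: if `O_p(K) = 1` then `A_p(K)` has nonzero reduced
rational homology in degree `m_p(K) - 1`. -/
def QDp (p : ℕ) (K : Type*) [Group K] : Prop :=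
  OpTrivial p K → RHomNZ (apIn p (⊤ : Subgroup K)) (pRank p K)

/-- The fixed-point subposet `A_p(H)^Q` under conjugation by the subgroup `Q`. -/
def apFixed (p : ℕ) {G : Type*} [Group G] (H Q : Subgroup G) : Set (Subgroup G) :=
  {E | E ∈ apIn p H ∧ ∀ x ∈ Q, ∀ g : G, g ∈ E ↔ x * g * x⁻¹ ∈ E}

/-- The fixed-point subposet `A_p(H)^g` under conjugation by the element `g`. -/
def apFixedElt (p : ℕ) {G : Type*} [Group G] (H : Subgroup G) (g : G) : Set (Subgroup G) :=
  {E | E ∈ apIn p H ∧ ∀ h : G, h ∈ E ↔ g * h * g⁻¹ ∈ E}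

/-- Property `R(2)` for a (nonabelian simple) group `L`. -/
def PropertyR2 (L : Type*) [Group L] : Prop :=
  ∃ Q : Subgroup L, qElementary 3 ↥Q ∧ Odd (Nat.card ↥Q) ∧ ¬ OpTrivial 3 ↥Q ∧
    ¬ ((3 : ℤ) ∣ redEuler (apFixed 2 (⊤ : Subgroup L) Q)) ∧
    ∀ E : Subgroup (MulAut L), E ≠ ⊥ → IsElemAb 2 E →
      E ≤ Subgroup.centralizer
        ((Subgroup.map (MulAut.conj : L →* MulAut L) Q : Subgroup (MulAut L)) : Set (MulAut L)) →
      E ≤ (MulAut.conj : L →* MulAut L).range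

/-! ## The pre-join of posets and the initial shuffle product -/

/-- The pre-join of `X` and `Y`: the poset `(C⁻X × C⁻Y) \ {(⊥, ⊥)}`. -/
abbrev PreJoin (X Y : Type*) := {p : WithBot X × WithBot Y // p ≠ (⊥, ⊥)}

/-- The embedding of `X` into the pre-join, `x ↦ (x, ⊥)`. -/
def inX {X Y : Type*} (x : X) : PreJoin X Y :=
  ⟨((x : WithBot X), ⊥), fun h => WithBot.coe_ne_bot (congrArg Prod.fst h)⟩

/-- The embedding of `Y` into the pre-join, `y ↦ (⊥, y)`. -/
def inY {X Y : Type*} (y : Y) : PreJoin X Y :=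
  ⟨(⊥, (y : WithBot Y)), fun h => WithBot.coe_ne_bot (congrArg Prod.snd h)⟩

/-- The element `(x, y)` of the pre-join. -/
def inXY {X Y : Type*} (x : X) (y : Y) : PreJoin X Y :=
  ⟨((x : WithBot X), (y : WithBot Y)), fun h => WithBot.coe_ne_bot (congrArg Prod.fst h)⟩

/-- `c` is a shuffle chain for the pair `(a, b)`: a maximal chain of the grid poset determined
by the `X`-part of `a` and by `b` (with the bottom `(⊥, ⊥)` removed), i.e. a chain of the
pre-join of cardinality `|a_X| + |b|` whose coordinates come from `a` and `b`. -/
def gridOK {X Y W : Type*} [PartialOrder X] [PartialOrder Y] [PartialOrder W]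
    (ιP : PreJoin X Y ↪o W) (a b : Finset W) (c : Finset (PreJoin X Y)) : Prop :=
  IsChain (· ≤ ·) (↑c : Set (PreJoin X Y)) ∧
  c.card = (a.filter fun w => ∃ x : X, w = ιP (inX x)).card + b.card ∧
  ∀ q ∈ c, (q.1.1 = ⊥ ∨ ∃ x : X, q.1.1 = (x : WithBot X) ∧ ιP (inX x) ∈ a) ∧
    (q.1.2 = ⊥ ∨ ∃ y : Y, q.1.2 = (y : WithBot Y) ∧ ιP (inY y) ∈ b)

/-- The number of inversions of the shuffle chain `c` (the number of cells of the
`a_X × b` rectangle lying below the corresponding lattice path). -/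
def invCount {X Y W : Type*} [PartialOrder X] [PartialOrder Y] [PartialOrder W]
    (ιP : PreJoin X Y ↪o W) (a b : Finset W) (c : Finset (PreJoin X Y)) : ℕ :=
  Set.ncard {xy : X × Y | ιP (inX xy.1) ∈ a ∧ ιP (inY xy.2) ∈ b ∧
    ∀ q ∈ c, q.1.1 = (xy.1 : WithBot X) → (xy.2 : WithBot Y) ≤ q.1.2}

/-- The coefficient of the chain `e` of `W` in the initial shuffle product `T(a, b)`. -/
def Tcoeff {X Y Z W : Type*} [PartialOrder X] [PartialOrder Y] [PartialOrder Z] [PartialOrder W]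
    (ιP : PreJoin X Y ↪o W) (ιZ : Z ↪o W) (a b e : Finset W) : ℚ :=
  ∑ᶠ c : Finset (PreJoin X Y),
    if gridOK ιP a b c ∧
        e = c.image (fun q => ιP q) ∪ a.filter (fun w => ∃ z : Z, w = ιZ z) then
      (-1 : ℚ) ^ invCount ιP a b c
    else 0

/-- The initial shuffle product `T_*(f ⊗ g)`, as a function on `Finset W`. -/
def Tmap {X Y Z W : Type*} [PartialOrder X] [PartialOrder Y] [PartialOrder Z] [PartialOrder W]
    (ιP : PreJoin X Y ↪o W) (ιZ : Z ↪o W) (f g : Finset W → ℚ) : Finset W → ℚ :=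
  fun e => ∑ᶠ a : Finset W, ∑ᶠ b : Finset W, f a * g b * Tcoeff ιP ιZ a b e

/-!
A quasisimple subnormal subgroup `L` either lies in a given normal subgroup `N` or centralizes
it: climbing a subnormal series `L = H₀ ⊴ H₁ ⊴ ⋯ ⊴ Hₙ = G`, if `L` centralizes `N ∩ Hᵢ` then
`[L, N ∩ Hᵢ₊₁, L] ≤ [N ∩ Hᵢ, L] = 1`, and the three subgroups lemma together with `L = [L, L]`
gives `[L, N ∩ Hᵢ₊₁] = 1`. Since a quasisimple group is not nilpotent, every component
centralizes `F(G)`, so `F(G) ≤ C := C_G(L₁ ⋯ Lₛ)` and `F(G) ≤ F(C)`; and since the same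
dichotomy also holds for a subnormal `N`, distinct components commute.

Conversely, let `N` be a nilpotent normal subgroup of `C`. It centralizes each `Lᵢ`, and any
other component `K` of `G` commutes with the `Lᵢ`, so `K` is a component of `C` and centralizes
`N`. Thus `N` lies in `D := C_G(E(G))`, a normal subgroup of `G` contained in `C`, and is normal
in `D`. Each Sylow subgroup of `N` is characteristic in `N`, hence a normal `p`-subgroup of `D`,
hence contained in `O_p(D) ≤ O_p(G) ≤ F(G)`. The same argument puts every normal `p`-subgroup
of `C` inside `O_p(G)`.
-/

open Subgroup

section Subnormal

variable {G : Type*} [Group G]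

theorem normalIn_iff {H K : Subgroup G} : NormalIn H K ↔ H ≤ K ∧ (H.subgroupOf K).Normal :=
  and_congr_right fun hHK => by rw [normal_subgroupOf_iff_le_normalizer hHK, le_normalizer_iff]

theorem isSubnormal_iff_subgroup_isSubnormal {L : Subgroup G} :
    IsSubnormal L ↔ L.IsSubnormal := by
  constructor
  · rintro ⟨n, c, h0, hn, hc⟩
    have hdown : ∀ k ≤ n, (c (n - k)).IsSubnormal := by
      intro k
      induction k with
      | zero => intro _; simp [hn]
      | succ k ih =>
        intro hk
        obtain ⟨hle, hnorm⟩ := normalIn_iff.1 (hc (n - (k + 1)) (by omega))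
        rw [show n - (k + 1) + 1 = n - k by omega] at hle hnorm
        exact .step _ _ hle (ih (by omega)) hnorm
    simpa [h0] using hdown n le_rfl
  · intro h
    obtain ⟨n, f, hmono, hnorm, h0, hn⟩ := h.exists_chain
    exact ⟨n, f, h0, hn, fun i _ => normalIn_iff.2 ⟨hmono i.le_succ, hnorm i⟩⟩

theorem IsComponent.isSubnormal {L : Subgroup G} (h : IsComponent L) : L.IsSubnormal :=
  isSubnormal_iff_subgroup_isSubnormal.1 h.1

end Subnormal

section Quasisimple

variable {G : Type*} [Group G]

theorem commutator_eq_self_iff {L : Subgroup G} : ⁅L, L⁆ = L ↔ commutator L = ⊤ := by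
  rw [commutator_def, ← (map_injective L.subtype_injective).eq_iff, map_commutator,
    ← MonoidHom.range_eq_map, range_subtype]

theorem map_center_of_mulEquiv {A B : Type*} [Group A] [Group B] (e : A ≃* B) :
    (center A).map e.toMonoidHom = center B := by
  ext b
  simp only [mem_map, mem_center_iff]
  constructor
  · rintro ⟨a, ha, rfl⟩ g
    simpa using congrArg e (ha (e.symm g))
  · intro hb
    refine ⟨e.symm b, fun g => e.injective ?_, by simp⟩
    simpa using hb (e g)

theorem IsQuasisimple.of_mulEquiv {G' : Type*} [Group G'] {L : Subgroup G} {L' : Subgroup G'}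
    (e : L ≃* L') (h : IsQuasisimple L) : IsQuasisimple L' := by
  obtain ⟨hperf, hsimple, a, b, hab⟩ := h
  let e' : (L ⧸ center L) ≃* (L' ⧸ center L') :=
    QuotientGroup.congr _ _ e (map_center_of_mulEquiv e)
  refine ⟨?_, ?_, e' a, e' b, ?_⟩
  · rw [commutator_eq_self_iff, commutator_def] at hperf ⊢
    rw [← map_top_of_surjective e.toMonoidHom e.surjective, ← map_commutator, hperf]
  · have := e'.symm.toEquiv.nontrivial
    exact IsSimpleGroup.isSimpleGroup_of_surjective e'.toMonoidHom e'.surjective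
  · rwa [← map_mul, ← map_mul, e'.injective.ne_iff]

theorem IsQuasisimple.subgroupOf {L K : Subgroup G} (h : IsQuasisimple L) (hLK : L ≤ K) :
    IsQuasisimple (L.subgroupOf K) :=
  h.of_mulEquiv (subgroupOfEquivOfLe hLK).symm

theorem IsComponent.map {G' : Type*} [Group G'] {L : Subgroup G} (h : IsComponent L)
    (e : G ≃* G') : IsComponent (L.map e.toMonoidHom) :=
  ⟨isSubnormal_iff_subgroup_isSubnormal.2 (h.isSubnormal.map e.surjective),
    h.2.of_mulEquiv (e.subgroupMap L)⟩

theorem IsQuasisimple.not_isNilpotent {L : Subgroup G} (h : IsQuasisimple L) :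
    ¬ Group.IsNilpotent L := by
  intro _
  obtain ⟨-, _, a, b, hab⟩ := h
  -- `L ⧸ Z(L)` is simple and nilpotent, hence commutative
  exact hab (mul_comm a b)

theorem le_center_or_eq_top_of_normal {Q : Type*} [Group Q] (hperf : commutator Q = ⊤)
    [IsSimpleGroup (Q ⧸ center Q)] (N : Subgroup Q) [hN : N.Normal] : N ≤ center Q ∨ N = ⊤ := by
  rcases (hN.map _ (QuotientGroup.mk'_surjective (center Q))).eq_bot_or_eq_top with h | h
  · left
    rwa [Subgroup.map_eq_bot_iff, QuotientGroup.ker_mk'] at h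
  · right
    have hsup : N ⊔ center Q = ⊤ := by
      rw [sup_comm, ← QuotientGroup.comap_map_mk', h, comap_top]
    rw [eq_top_iff, ← hperf]
    exact Normal.commutator_le_of_self_sup_commutative_eq_top hsup inferInstance

theorem IsQuasisimple.le_or_commutator_eq_bot {L X : Subgroup G} (hL : IsQuasisimple L)
    (hXL : X ≤ L) (hnorm : L ≤ normalizer X) : L ≤ X ∨ ⁅X, L⁆ = ⊥ := by
  have := (normal_subgroupOf_iff_le_normalizer hXL).2 hnorm
  have := hL.2.1
  rcases le_center_or_eq_top_of_normal (commutator_eq_self_iff.1 hL.1) (X.subgroupOf L)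
    with hcenter | htop
  · refine .inr (commutator_eq_bot_iff_le_centralizer.2 fun x hx =>
      mem_centralizer_iff.2 fun y hy => ?_)
    have hx' : (⟨x, hXL hx⟩ : L) ∈ X.subgroupOf L := hx
    exact congrArg Subtype.val (mem_center_iff.1 (hcenter hx') ⟨y, hy⟩)
  · exact .inl (subgroupOf_eq_top.1 htop)

theorem IsQuasisimple.le_or_commutator_eq_bot_of_normal {L N : Subgroup G}
    (hL : IsQuasisimple L) (hsub : L.IsSubnormal) [N.Normal] : L ≤ N ∨ ⁅N, L⁆ = ⊥ := by
  obtain ⟨n, f, hmono, hnorm, h0, hn⟩ := hsub.exists_chain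
  suffices ∀ i, L ≤ N ∨ ⁅N ⊓ f i, L⁆ = ⊥ by simpa [hn] using this n
  intro i
  induction i with
  | zero =>
    rw [h0]
    refine (hL.le_or_commutator_eq_bot inf_le_right ?_).imp_left (le_trans · inf_le_left)
    exact le_trans (le_inf (by simp [normalizer_eq_top]) le_normalizer)
      inf_normalizer_le_normalizer_inf
  | succ i ih =>
    refine ih.imp_right fun hcomm => ?_
    have hLf : L ≤ f i := h0 ▸ hmono (Nat.zero_le i)
    have hstep : ⁅L, N ⊓ f (i + 1)⁆ ≤ N ⊓ f i :=
      le_inf ((commutator_mono le_rfl inf_le_left).trans (commutator_le_right L N))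
        ((commutator_mono hLf inf_le_right).trans
          (le_normalizer_iff_commutator_le_left.1
            ((normal_subgroupOf_iff_le_normalizer (hmono i.le_succ)).1 (hnorm i))))
    have h1 : ⁅⁅L, N ⊓ f (i + 1)⁆, L⁆ = ⊥ :=
      le_bot_iff.1 (hcomm ▸ commutator_mono hstep le_rfl)
    have h2 : ⁅⁅N ⊓ f (i + 1), L⁆, L⁆ = ⊥ := by rwa [commutator_comm (N ⊓ f (i + 1))]
    have h3 := commutator_commutator_eq_bot_of_rotate h1 h2
    rwa [hL.1, commutator_comm] at h3

theorem IsQuasisimple.commutator_eq_bot_of_isNilpotent {L N : Subgroup G} (hL : IsQuasisimple L)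
    (hsub : L.IsSubnormal) [N.Normal] (hnil : Group.IsNilpotent N) : ⁅N, L⁆ = ⊥ :=
  (hL.le_or_commutator_eq_bot_of_normal hsub).resolve_left fun hLN =>
    hL.not_isNilpotent (Group.nilpotent_of_mulEquiv (subgroupOfEquivOfLe hLN))

theorem IsQuasisimple.le_or_commutator_eq_bot_of_isSubnormal {L H : Subgroup G}
    (hL : IsQuasisimple L) (hLsub : L.IsSubnormal) (hH : H.IsSubnormal) : L ≤ H ∨ ⁅H, L⁆ = ⊥ := by
  induction hH with
  | top => exact .inl le_top
  | step H K hHK _ hHnorm ih =>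
    rcases ih with hLK | hKL
    · rcases (hL.subgroupOf hLK).le_or_commutator_eq_bot_of_normal hLsub.subgroupOf
          (N := H.subgroupOf K) with hle | hcomm
      · have := map_mono (f := K.subtype) hle
        rw [map_subgroupOf_eq_of_le hLK, map_subgroupOf_eq_of_le hHK] at this
        exact .inl this
      · have := congrArg (map K.subtype) hcomm
        rw [map_commutator, map_subgroupOf_eq_of_le hLK, map_subgroupOf_eq_of_le hHK,
          Subgroup.map_bot] at this
        exact .inr this
    · exact .inr (le_bot_iff.1 (hKL ▸ commutator_mono hHK le_rfl))

theorem IsComponent.commutator_eq_bot_of_ne {L M : Subgroup G} (hL : IsComponent L)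
    (hM : IsComponent M) (hne : L ≠ M) : ⁅L, M⁆ = ⊥ := by
  rcases hL.2.le_or_commutator_eq_bot_of_isSubnormal hL.isSubnormal hM.isSubnormal with hLM | h
  · exact (hM.2.le_or_commutator_eq_bot_of_isSubnormal hM.isSubnormal hL.isSubnormal).resolve_left
      fun hML => hne (le_antisymm hLM hML)
  · rwa [commutator_comm]

instance layer_characteristic : (layer G).Characteristic := by
  refine characteristic_iff_map_le.2 fun φ => ?_
  rw [layer, (gc_map_comap _).l_sSup]
  exact iSup₂_le fun L hL => le_sSup (IsComponent.map hL φ)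

end Quasisimple

section Cores

variable {G : Type*} [Group G] {p : ℕ}

/-- `O_p(G)`. -/
def pCore (p : ℕ) (G : Type*) [Group G] : Subgroup G :=
  sSup {N : Subgroup G | N.Normal ∧ IsPGroup p N}

theorem le_pCore {N : Subgroup G} [hN : N.Normal] (h : IsPGroup p N) : N ≤ pCore p G :=
  le_sSup ⟨hN, h⟩

theorem isPGroup_pCore : IsPGroup p (pCore p G) :=
  Sylow.sSup_of_normal _ (fun _ h => h.2) (fun _ h => h.1)

instance pCore_characteristic : (pCore p G).Characteristic := by
  refine characteristic_iff_map_le.2 fun φ => ?_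
  rw [pCore, (gc_map_comap _).l_sSup]
  exact iSup₂_le fun N ⟨hN, hNp⟩ => le_sSup ⟨hN.map _ φ.surjective, hNp.map _⟩

theorem map_subtype_pCore_le {D : Subgroup G} [D.Normal] :
    (pCore p D).map D.subtype ≤ pCore p G :=
  le_pCore (isPGroup_pCore.map _)

theorem OpTrivial.pCore_eq_bot (h : OpTrivial p G) : pCore p G = ⊥ :=
  h _ inferInstance isPGroup_pCore

theorem le_fittingSubgroup {N : Subgroup G} [hN : N.Normal] (h : Group.IsNilpotent N) :
    N ≤ fittingSubgroup G :=
  le_sSup ⟨hN, h⟩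

theorem pCore_le_fittingSubgroup [Finite G] (hp : p.Prime) : pCore p G ≤ fittingSubgroup G :=
  have := Fact.mk hp
  le_fittingSubgroup isPGroup_pCore.isNilpotent

theorem eq_top_of_forall_sylow_le [Finite G] {H : Subgroup G}
    (h : ∀ p, p.Prime → ∃ P : Sylow p G, ↑P ≤ H) : H = ⊤ := by
  rw [← index_eq_one]
  by_contra hne
  obtain ⟨p, hp, hdvd⟩ := Nat.exists_prime_and_dvd hne
  have := Fact.mk hp
  obtain ⟨P, hP⟩ := h p hp
  exact P.not_dvd_index (hdvd.trans (index_dvd_of_le hP))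

theorem map_subtype_fittingSubgroup_le [Finite G] {D : Subgroup G} [D.Normal] :
    (fittingSubgroup D).map D.subtype ≤ fittingSubgroup G := by
  rw [fittingSubgroup, (gc_map_comap _).l_sSup]
  refine iSup₂_le fun M ⟨hM, hnil⟩ => ?_
  suffices h : (fittingSubgroup G).comap (D.subtype.comp M.subtype) = ⊤ by
    rw [← range_subtype M, MonoidHom.range_eq_map, map_map, map_le_iff_le_comap, h]
  refine eq_top_of_forall_sylow_le fun p hp => ?_
  have := Fact.mk hp
  let P : Sylow p M := Classical.arbitrary _
  have := Sylow.characteristic_of_normal P inferInstance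
  refine ⟨P, map_le_iff_le_comap.1 ?_⟩
  rw [← map_map]
  calc ((P : Subgroup M).map M.subtype).map D.subtype
      ≤ (pCore p D).map D.subtype := map_mono (le_pCore (P.isPGroup'.map _))
    _ ≤ pCore p G := map_subtype_pCore_le
    _ ≤ fittingSubgroup G := pCore_le_fittingSubgroup hp

theorem le_map_subtype_fittingSubgroup {H : Subgroup G} (hFH : fittingSubgroup G ≤ H) :
    fittingSubgroup G ≤ (fittingSubgroup H).map H.subtype := by
  refine sSup_le fun N ⟨hN, hnil⟩ => ?_
  have hNH : N ≤ H := (le_fittingSubgroup hnil).trans hFH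
  rw [← map_subgroupOf_eq_of_le hNH]
  exact map_mono (le_fittingSubgroup (Group.nilpotent_of_mulEquiv (subgroupOfEquivOfLe hNH).symm))

end Cores

section Centralizer

variable {G : Type*} [Group G] {ι : Type*} {L : ι → Subgroup G}

theorem exists_normal_of_map_subtype_le {C D : Subgroup G} (hDC : D ≤ C) (N : Subgroup C)
    [hN : N.Normal] (hND : N.map C.subtype ≤ D) :
    ∃ M : Subgroup D, M.Normal ∧ Nonempty (N ≃* M) ∧ M.map D.subtype = N.map C.subtype := by
  have : ((N.map C.subtype).subgroupOf C).Normal := by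
    rwa [subgroupOf, comap_map_eq_self_of_injective C.subtype_injective]
  exact ⟨_, (normal_subgroupOf_iff_le_normalizer hND).2
      (hDC.trans (le_normalizer_of_normal_subgroupOf (map_subtype_le N))),
    ⟨(N.equivMapOfInjective _ C.subtype_injective).trans (subgroupOfEquivOfLe hND).symm⟩,
    map_subgroupOf_eq_of_le hND⟩

theorem fittingSubgroup_le_centralizer {K : Subgroup G} (hK : IsComponent K) :
    fittingSubgroup G ≤ centralizer K :=
  sSup_le fun _ ⟨_, hnil⟩ => commutator_eq_bot_iff_le_centralizer.1
    (hK.2.commutator_eq_bot_of_isNilpotent hK.isSubnormal hnil)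

theorem map_subtype_le_centralizer_layer (hcomp : ∀ i, IsComponent (L i))
    (N : Subgroup (centralizer ((⨆ i, L i : Subgroup G) : Set G))) [N.Normal]
    (hnil : Group.IsNilpotent N) :
    N.map (centralizer ((⨆ i, L i : Subgroup G) : Set G)).subtype ≤
      centralizer (layer G : Set G) := by
  rw [le_centralizer_iff]
  refine sSup_le fun K hK => ?_
  rw [← le_centralizer_iff]
  by_cases hKL : ∃ i, L i = K
  · obtain ⟨i, rfl⟩ := hKL
    exact (map_subtype_le _).trans (centralizer_le (SetLike.coe_subset_coe.2 (le_iSup L i)))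
  · have hKC : K ≤ centralizer ((⨆ i, L i : Subgroup G) : Set G) :=
      le_centralizer_iff.1 <| iSup_le fun i => commutator_eq_bot_iff_le_centralizer.1
        ((hcomp i).commutator_eq_bot_of_ne hK (not_exists.1 hKL i))
    have h := congrArg (map (centralizer ((⨆ i, L i : Subgroup G) : Set G)).subtype) <|
      (hK.2.subgroupOf hKC).commutator_eq_bot_of_isNilpotent hK.isSubnormal.subgroupOf hnil
    rw [map_commutator, map_subgroupOf_eq_of_le hKC, Subgroup.map_bot] at h
    exact commutator_eq_bot_iff_le_centralizer.1 h

end Centralizer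

theorem statement2_general {G : Type*} [Group G] [Finite G] {s : ℕ} (L : Fin s → Subgroup G)
    (hcomp : ∀ i, IsComponent (L i)) :
    Subgroup.map (Subgroup.centralizer ((⨆ i, L i : Subgroup G) : Set G)).subtype
      (fittingSubgroup ↥(Subgroup.centralizer ((⨆ i, L i : Subgroup G) : Set G)))
      = fittingSubgroup G ∧
    ∀ p : ℕ, p.Prime → OpTrivial p G →
      OpTrivial p ↥(Subgroup.centralizer ((⨆ i, L i : Subgroup G) : Set G)) := by
  have hDC : centralizer (layer G : Set G) ≤ centralizer ((⨆ i, L i : Subgroup G) : Set G) :=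
    centralizer_le (SetLike.coe_subset_coe.2 (iSup_le fun i => le_sSup (hcomp i)))
  refine ⟨le_antisymm ?_ ?_, fun p hp hOp N hN hNp => ?_⟩
  · rw [fittingSubgroup, (gc_map_comap _).l_sSup]
    refine iSup₂_le fun N ⟨hN, hnil⟩ => ?_
    obtain ⟨M, hM, ⟨e⟩, hMN⟩ := exists_normal_of_map_subtype_le hDC N
      (map_subtype_le_centralizer_layer hcomp N hnil)
    rw [← hMN]
    exact (map_mono (le_fittingSubgroup (Group.nilpotent_of_mulEquiv e))).trans
      map_subtype_fittingSubgroup_le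
  · exact le_map_subtype_fittingSubgroup <| le_centralizer_iff.1 <|
      iSup_le fun i => le_centralizer_iff.1 (fittingSubgroup_le_centralizer (hcomp i))
  · have := Fact.mk hp
    obtain ⟨M, hM, ⟨e⟩, hMN⟩ := exists_normal_of_map_subtype_le hDC N
      (map_subtype_le_centralizer_layer hcomp N hNp.isNilpotent)
    rw [← map_eq_bot_iff_of_injective N (subtype_injective _), ← hMN, ← le_bot_iff,
      ← hOp.pCore_eq_bot]
    exact (map_mono (le_pCore (hNp.of_equiv e))).trans map_subtype_pCore_le

/-- if `L 0, …, L (s-1)` are pairwise distinct components of a finite group `G`,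
then the Fitting subgroup of `C_G(L 0 ⋯ L (s-1))` equals the Fitting subgroup of `G`;
in particular for every prime `p`, if `O_p(G) = 1` then `O_p(C_G(L 0 ⋯ L (s-1))) = 1`. -/
theorem statement2 {G : Type*} [Group G] [Finite G] {s : ℕ} (L : Fin s → Subgroup G)
    (hinj : Function.Injective L) (hcomp : ∀ i, IsComponent (L i)) :
    Subgroup.map (Subgroup.centralizer ((⨆ i, L i : Subgroup G) : Set G)).subtype
      (fittingSubgroup ↥(Subgroup.centralizer ((⨆ i, L i : Subgroup G) : Set G)))
      = fittingSubgroup G ∧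
    ∀ p : ℕ, p.Prime → OpTrivial p G →
      OpTrivial p ↥(Subgroup.centralizer ((⨆ i, L i : Subgroup G) : Set G)) :=
  statement2_general L hcomp

end QF
end
end

section
/- Let p be a prime, G a finite group, H ≤ G, and put F_G(H) = {E ∈ A_p(G) : E ∩ H = 1}, which is disjoint from A_p(H). Define a relation ≺ on the union A_p(H) ∪ F_G(H) as follows: for A, A' ∈ A_p(H), A ≺ A' iff A < A' (proper inclusion); for F, F' ∈ F_G(H), F ≺ F' iff F' < F (reverse proper inclusion); for A ∈ A_p(H) and F ∈ F_G(H), A ≺ F iff A ≤ C_H(F); and F ≺ A never holds. Then ≺ is a strict partial order. -/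
attribute [local instance] Classical.propDecidable

noncomputable section

namespace QF

/-- The order relation `≺` on the Thévenaz poset `A_p(H) ∪ F_G(H)` (with the reversed
inclusion order on `F_G(H)`). -/
def precT (p : ℕ) {G : Type*} [Group G] (H : Subgroup G) (A A' : Subgroup G) : Prop :=
  (A ∈ apIn p H ∧ A' ∈ apIn p H ∧ A < A') ∨
  ((A ∈ apIn p (⊤ : Subgroup G) ∧ A ⊓ H = ⊥) ∧
    (A' ∈ apIn p (⊤ : Subgroup G) ∧ A' ⊓ H = ⊥) ∧ A' < A) ∨
  (A ∈ apIn p H ∧ (A' ∈ apIn p (⊤ : Subgroup G) ∧ A' ⊓ H = ⊥) ∧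
    A ≤ H ⊓ Subgroup.centralizer (A' : Set G))

/-! The relation never chains across the two halves: a member of `A_p(H)` is a nontrivial
subgroup of `H`, so it meets `H` nontrivially and is not in `F_G(H)`. The only genuinely mixed
case of transitivity, `A ≺ F ≺ F'`, holds because centralizers reverse inclusion. -/

section Thevenaz

variable {p : ℕ} {G : Type*} [Group G] {H A F F' : Subgroup G}

theorem inf_ne_bot_of_mem_apIn (hA : A ∈ apIn p H) : A ⊓ H ≠ ⊥ := by
  rw [inf_eq_left.mpr hA.2.2]
  exact hA.1

theorem inf_centralizer_anti (hF : F' ≤ F) :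
    H ⊓ Subgroup.centralizer (F : Set G) ≤ H ⊓ Subgroup.centralizer (F' : Set G) :=
  inf_le_inf_left H (Subgroup.centralizer_le (SetLike.coe_subset_coe.mpr hF))

theorem precT_irrefl : ¬ precT p H A A := by
  rintro (⟨-, -, hlt⟩ | ⟨-, -, hlt⟩ | ⟨hA, ⟨-, hAH⟩, -⟩)
  · exact hlt.false
  · exact hlt.false
  · exact inf_ne_bot_of_mem_apIn hA hAH

theorem precT_trans {A' A'' : Subgroup G} (h₁ : precT p H A A') (h₂ : precT p H A' A'') :
    precT p H A A'' := by
  rcases h₁ with ⟨hA, hA', hAA'⟩ | ⟨hA, hA', hA'A⟩ | ⟨hA, hA', hAC⟩ <;>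
    rcases h₂ with ⟨hA'₁, hA'', hA'A''⟩ | ⟨hA'₂, hA'', hA''A'⟩ | ⟨hA'₁, hA'', hA'C⟩
  · exact Or.inl ⟨hA, hA'', hAA'.trans hA'A''⟩
  · exact (inf_ne_bot_of_mem_apIn hA' hA'₂.2).elim
  · exact Or.inr <| Or.inr ⟨hA, hA'', hAA'.le.trans hA'C⟩
  · exact (inf_ne_bot_of_mem_apIn hA'₁ hA'.2).elim
  · exact Or.inr <| Or.inl ⟨hA, hA'', hA''A'.trans hA'A⟩
  · exact (inf_ne_bot_of_mem_apIn hA'₁ hA'.2).elim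
  · exact (inf_ne_bot_of_mem_apIn hA'₁ hA'.2).elim
  · exact Or.inr <| Or.inr ⟨hA, hA'', hAC.trans (inf_centralizer_anti hA''A'.le)⟩
  · exact (inf_ne_bot_of_mem_apIn hA'₁ hA'.2).elim

end Thevenaz

theorem statement7_general {p : ℕ} {G : Type*} [Group G]
    (H : Subgroup G) :
    (∀ A, ¬ precT p H A A) ∧
    (∀ A A' A'', precT p H A A' → precT p H A' A'' → precT p H A A'') :=
  ⟨fun _ => precT_irrefl, fun _ _ _ => precT_trans⟩

/-- the relation `≺` on `A_p(H) ∪ F_G(H)` is a strict partial order. -/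
theorem statement7 {p : ℕ} (hp : p.Prime) {G : Type*} [Group G] [Finite G]
    (H : Subgroup G) :
    (∀ A, ¬ precT p H A A) ∧
    (∀ A A' A'', precT p H A A' → precT p H A' A'' → precT p H A A'') :=
  statement7_general H

end QF
end
end
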